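/- arXiv:2509.05812 — 2 statements merged into one kernel-verified Lean document; each statement's English description precedes it below -/
import Mathlib

section
/- Let u be a 1-balanced sequence over {a, b} in which the letter a has frequency α ∈ (0, 1), let 𝐚 : ℕ → 𝒜 and 𝐛 : ℕ → ℬ be sequences over disjoint alphabets, and let v = colour(u, 𝐚, 𝐛). Then for every n ∈ ℕ, the factor complexities satisfy 𝒞_v(n) ≤ (n+1) · 𝒞_𝐚(⌈αn⌉) · 𝒞_𝐛(⌈(1−α)n⌉). -/
open Finset Filter Topology

/-- Number of occurrences of the letter `c` in the factor of `u` of length `n`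
starting at position `i`, i.e. `#{t : i ≤ t < i+n, u t = c}`. -/
def cnt {A : Type*} [DecidableEq A] (u : ℕ → A) (c : A) (i n : ℕ) : ℕ :=
  ((Finset.Ico i (i + n)).filter (fun t => u t = c)).card

/-- A sequence `u` is `k`-balanced if the numbers of occurrences of any letter in
any two factors of the same length differ by at most `k`. -/
def IsBalanced {A : Type*} [DecidableEq A] (k : ℕ) (u : ℕ → A) : Prop :=
  ∀ i j n : ℕ, ∀ c : A, ((cnt u c i n : ℤ) - (cnt u c j n : ℤ)).natAbs ≤ k

/-- The letter `c` has frequency `f` in the sequence `u`. -/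
def HasFreq {A : Type*} [DecidableEq A] (u : ℕ → A) (c : A) (f : ℝ) : Prop :=
  Tendsto (fun n : ℕ => (cnt u c 0 n : ℝ) / n) atTop (𝓝 f)

/-- Colouring of a binary sequence `u` (letter `a` is `true`, letter `b` is `false`)
by a sequence `va` over `A` and a sequence `vb` over `B` (disjoint alphabets,
realized as the two summands of `A ⊕ B`): the `n`-th occurrence of `a` in `u`
is replaced by `va n`, and the `n`-th occurrence of `b` by `vb n`. -/
def colour {A B : Type*} (u : ℕ → Bool) (va : ℕ → A) (vb : ℕ → B) (N : ℕ) : A ⊕ B :=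
  if u N then Sum.inl (va (cnt u true 0 N)) else Sum.inr (vb (cnt u false 0 N))

/-- The factor complexity of `u`: the number of distinct words of length `n`
occurring as factors of `u`. -/
noncomputable def complexity {A : Type*} (u : ℕ → A) (n : ℕ) : ℕ :=
  Set.ncard {w : Fin n → A | ∃ i : ℕ, ∀ t : Fin n, w t = u (i + t)}

/-!
A factor of `v = colour u va vb` of length `n` at position `i` is determined by the factor of
`u` at `i` together with the factors of `va` and `vb` of lengths `⌈αn⌉` and `⌈(1-α)n⌉` starting
at the numbers of `a`'s and of `b`'s in `u` before `i`, as long as that window of `u` has at most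
`⌈αn⌉` letters `a` and at most `⌈(1-α)n⌉` letters `b`. Balance and frequency give
`|#a u[i, i+m) - αm| ≤ 1` for every window, so a window violating this has exactly `αn + 1`
letters `a` (or `(1-α)n + 1` letters `b`): across it the discrepancy `#a u[0, t) - αt` climbs
from its minimum to its maximum, and a Euclidean descent shows that such a window of `u` occurs
only once. Since a `1`-balanced binary sequence has at most one right special factor of each
length, it has at most `n + 1` factors of length `n`, and the bound follows.
-/

section Counting

variable {A : Type*} [DecidableEq A] (u : ℕ → A) (c : A)

@[simp]
lemma cnt_zero (i : ℕ) : cnt u c i 0 = 0 := by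
  simp [cnt]

lemma cnt_add (i m k : ℕ) : cnt u c i (m + k) = cnt u c i m + cnt u c (i + m) k := by
  rw [cnt, cnt, cnt, ← add_assoc,
    ← Finset.Ico_union_Ico_eq_Ico (b := i + m) (by omega) (by omega),
    Finset.filter_union, Finset.card_union_of_disjoint
      (Finset.disjoint_filter_filter (Finset.Ico_disjoint_Ico_consecutive _ _ _))]

lemma cnt_succ (i m : ℕ) :
    cnt u c i (m + 1) = cnt u c i m + if u (i + m) = c then 1 else 0 := by
  rw [cnt_add]
  congr 1
  split_ifs <;> simp [cnt, Finset.filter_singleton, *]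

lemma cnt_lt_cnt_of_lt {i t m : ℕ} (ht : t < m) (hc : u (i + t) = c) :
    cnt u c i t < cnt u c i m := by
  obtain ⟨k, rfl⟩ := Nat.exists_eq_add_of_lt ht
  rw [add_right_comm, cnt_add, cnt_succ, if_pos hc]
  omega

variable {u} in
lemma cnt_congr {u' : ℕ → A} {i j m : ℕ} (h : ∀ t < m, u (i + t) = u' (j + t)) :
    cnt u c i m = cnt u' c j m := by
  induction m with
  | zero => simp
  | succ m ih => rw [cnt_succ, cnt_succ, ih (fun t ht => h t (by omega)), h m (by omega)]

end Counting

lemma cnt_true_add_cnt_false (u : ℕ → Bool) (i m : ℕ) :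
    cnt u true i m + cnt u false i m = m := by
  induction m with
  | zero => simp
  | succ m ih => cases h : u (i + m) <;> simp [cnt_succ, h] <;> omega

section Factors

variable {A : Type*}

def factor (u : ℕ → A) (n i : ℕ) : Fin n → A := fun t => u (i + t)

lemma factor_eq_factor_iff {u : ℕ → A} {n i j : ℕ} :
    factor u n i = factor u n j ↔ ∀ t < n, u (i + t) = u (j + t) := by
  simp [factor, funext_iff, Fin.forall_iff]

lemma complexity_eq_ncard_range (u : ℕ → A) (n : ℕ) :
    complexity u n = (Set.range (factor u n)).ncard := by
  rw [complexity]
  congr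
  ext w
  simp [factor, funext_iff, eq_comm]

@[simp]
lemma complexity_zero (u : ℕ → A) : complexity u 0 = 1 := by
  rw [complexity_eq_ncard_range, Set.ncard_eq_one]
  exact ⟨factor u 0 0,
    Set.eq_singleton_iff_unique_mem.mpr ⟨⟨0, rfl⟩, fun _ _ => Subsingleton.elim _ _⟩⟩

lemma factor_succ (u : ℕ → A) (n i : ℕ) :
    factor u (n + 1) i = Fin.snoc (factor u n i) (u (i + n)) := by
  funext t
  induction t using Fin.lastCases <;> simp [factor]

lemma finite_range_factor {u : ℕ → A} (hu : (Set.range u).Finite) (m : ℕ) :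
    (Set.range (factor u m)).Finite :=
  (Set.Finite.pi fun _ => hu).subset <| by
    rintro _ ⟨i, rfl⟩ t -
    exact ⟨i + t, rfl⟩

lemma finite_range_of_finite_range_factor {u : ℕ → A} {n : ℕ} (hn : 0 < n)
    (h : (Set.range (factor u n)).Finite) : (Set.range u).Finite :=
  (h.image fun w => w ⟨0, hn⟩).subset <| by
    rintro _ ⟨i, rfl⟩
    exact ⟨factor u n i, ⟨i, rfl⟩, rfl⟩

end Factors

lemma ncard_le_ncard_image_add_one {α β : Type*} {s : Set α} {f : α → β} {x : α}
    (hs : s.Finite) (hf : Set.InjOn f (s \ {x})) : s.ncard ≤ (f '' s).ncard + 1 :=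
  calc s.ncard ≤ (s \ {x}).ncard + ({x} : Set α).ncard :=
        Set.ncard_le_ncard_sdiff_add_ncard s {x}
    _ = (f '' (s \ {x})).ncard + 1 := by rw [hf.ncard_image, Set.ncard_singleton]
    _ ≤ (f '' s).ncard + 1 := by
      gcongr
      exacts [hs.image f, Set.sdiff_subset]

lemma ncard_range_le_of_factorsThrough {ι α β : Type*} {f : ι → α} {g : ι → β}
    (h : Function.FactorsThrough f g) (hg : (Set.range g).Finite) :
    (Set.range f).ncard ≤ (Set.range g).ncard := by
  rcases isEmpty_or_nonempty ι with hι | ⟨⟨i₀⟩⟩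
  · simp [Set.range_eq_empty]
  · rw [← h.extend_comp fun _ => f i₀, Set.range_comp]
    exact Set.ncard_image_le hg

section Discrepancy

variable {A : Type*} [DecidableEq A] {u : ℕ → A} {c : A} {f : ℝ}

lemma IsBalanced.abs_cnt_sub_cnt_le (hbal : IsBalanced 1 u) (c : A) (i j m : ℕ) :
    |(cnt u c i m : ℝ) - cnt u c j m| ≤ 1 := by
  have h : |(cnt u c i m : ℤ) - cnt u c j m| ≤ 1 := by
    rw [Int.abs_eq_natAbs]
    exact_mod_cast hbal i j m c
  exact_mod_cast h

lemma IsBalanced.abs_cnt_sub_le (hbal : IsBalanced 1 u) (hfreq : HasFreq u c f) (i m : ℕ) :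
    |(cnt u c i m : ℝ) - f * m| ≤ 1 := by
  rcases Nat.eq_zero_or_pos m with rfl | hm
  · simp
  set r : ℝ := (cnt u c i m : ℝ)
  have hblocks : ∀ k : ℕ, |(cnt u c 0 (k * m) : ℝ) - k * r| ≤ k := by
    intro k
    induction k with
    | zero => simp
    | succ k ih =>
      rw [add_mul, one_mul, cnt_add, zero_add]
      push_cast
      calc _ = |((cnt u c 0 (k * m) : ℝ) - k * r) + ((cnt u c (k * m) m : ℝ) - r)| := by
            ring_nf
        _ ≤ k + 1 :=
          (abs_add_le _ _).trans (add_le_add ih (hbal.abs_cnt_sub_cnt_le c _ i m))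
  have hlim : Tendsto (fun k : ℕ => (cnt u c 0 (k * m) : ℝ) / (k * m : ℕ) * m) atTop
      (𝓝 (f * m)) :=
    (hfreq.comp (tendsto_id.atTop_mul_const' hm)).mul_const _
  have hclose : ∀ᶠ k : ℕ in atTop, |(cnt u c 0 (k * m) : ℝ) / (k * m : ℕ) * m - r| ≤ 1 := by
    filter_upwards [eventually_gt_atTop 0] with k hk
    have hk' : (0 : ℝ) < k := by exact_mod_cast hk
    rw [show (cnt u c 0 (k * m) : ℝ) / (k * m : ℕ) * m - r =
        ((cnt u c 0 (k * m) : ℝ) - k * r) / k by push_cast; field_simp,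
      abs_div, abs_of_pos hk', div_le_one hk']
    exact hblocks k
  rw [abs_sub_comm]
  exact le_of_tendsto (hlim.sub_const r).abs hclose

noncomputable def discrepancy (u : ℕ → A) (c : A) (f : ℝ) (t : ℕ) : ℝ :=
  cnt u c 0 t - f * t

lemma discrepancy_add_sub (i m : ℕ) :
    discrepancy u c f (i + m) - discrepancy u c f i = cnt u c i m - f * m := by
  rw [discrepancy, discrepancy, cnt_add, zero_add]
  push_cast
  ring

lemma IsBalanced.discrepancy_le (hbal : IsBalanced 1 u) (hfreq : HasFreq u c f) (x y : ℕ) :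
    discrepancy u c f x ≤ discrepancy u c f y + 1 := by
  rcases le_total x y with h | h <;> obtain ⟨k, rfl⟩ := Nat.exists_eq_add_of_le h
  · linarith [(abs_le.mp (hbal.abs_cnt_sub_le hfreq x k)).1,
      discrepancy_add_sub (u := u) (c := c) (f := f) x k]
  · linarith [(abs_le.mp (hbal.abs_cnt_sub_le hfreq y k)).2,
      discrepancy_add_sub (u := u) (c := c) (f := f) y k]

lemma IsBalanced.discrepancy_add_sub_le (hbal : IsBalanced 1 u) (i j m : ℕ) :
    discrepancy u c f (i + m) - discrepancy u c f i ≤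
      discrepancy u c f (j + m) - discrepancy u c f j + 1 := by
  rw [discrepancy_add_sub, discrepancy_add_sub]
  linarith [(abs_le.mp (hbal.abs_cnt_sub_cnt_le c i j m)).2]

end Discrepancy

section Walk

variable {D : ℕ → ℝ}

lemma false_of_rise_of_drop (hle : ∀ x y, D x ≤ D y + 1)
    (hinc : ∀ i j m, D (i + m) - D i ≤ D (j + m) - D j + 1) {h l n g : ℕ}
    (hrise : D (h + n) = D h + 1) (hdrop : D (l + g) = D l - 1) : False := by
  -- Balance makes the longer window start like the shorter one; cutting that start off leaves
  -- a shorter rise or drop.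
  induction hN : n + g using Nat.strong_induction_on generalizing h l n g with
  | _ N ih =>
  rcases lt_trichotomy n g with hng | rfl | hgn
  · obtain ⟨k, rfl⟩ := Nat.exists_eq_add_of_lt hng
    rcases Nat.eq_zero_or_pos n with rfl | hn
    · rw [add_zero] at hrise
      linarith
    have hmid : D (l + n) = D l := by
      linarith [hinc h l n, hle (l + n) (l + (n + k + 1))]
    refine ih (n + (k + 1)) (by omega) hrise (l := l + n) ?_ rfl
    rw [show l + n + (k + 1) = l + (n + k + 1) by omega, hmid, hdrop]
  · linarith [hinc h l n]
  · obtain ⟨k, rfl⟩ := Nat.exists_eq_add_of_lt hgn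
    rcases Nat.eq_zero_or_pos g with rfl | hg
    · rw [add_zero] at hdrop
      linarith
    have hmid : D (h + g) = D h := by
      linarith [hinc h l g, hle (h + (g + k + 1)) (h + g)]
    refine ih ((k + 1) + g) (by omega) (h := h + g) ?_ hdrop rfl
    rw [show h + g + (k + 1) = h + (g + k + 1) by omega, hmid, hrise]

lemma false_of_rise_of_shift (hle : ∀ x y, D x ≤ D y + 1)
    (hinc : ∀ i j m, D (i + m) - D i ≤ D (j + m) - D j + 1) {n i j : ℕ} (hij : i < j)
    (hshift : ∀ t ≤ n, D (j + t) - D j = D (i + t) - D i) (hrise : D (i + n) = D i + 1) :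
    False := by
  -- An overlapping copy shifted by `d` leaves a rise of length `n - d`; a disjoint copy leaves
  -- a drop between the two.
  induction n using Nat.strong_induction_on with
  | _ n ih =>
  have hji : D j = D i := by
    linarith [hshift n le_rfl, hle (i + n) j, hle (j + n) i]
  obtain ⟨d, rfl⟩ := Nat.exists_eq_add_of_lt hij
  rcases lt_or_ge (d + 1) n with hdn | hnd
  · refine ih (n - (d + 1)) (by omega) (fun t ht => hshift t (by omega)) ?_
    have h := hshift (n - (d + 1)) (by omega)
    rw [show i + d + 1 + (n - (d + 1)) = i + n by omega] at h
    linarith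
  · refine false_of_rise_of_drop hle hinc hrise (l := i + n) (g := d + 1 - n) ?_
    rw [show i + n + (d + 1 - n) = i + d + 1 by omega]
    linarith

end Walk

lemma IsBalanced.eq_of_factor_eq_of_ceil_lt_cnt {A : Type*} [DecidableEq A] {u : ℕ → A}
    {c : A} {f : ℝ} (hbal : IsBalanced 1 u) (hfreq : HasFreq u c f) {n i j : ℕ}
    (hpat : factor u n i = factor u n j) (hheavy : ⌈f * n⌉₊ < cnt u c i n) : i = j := by
  set D := discrepancy u c f
  have hle := hbal.discrepancy_le hfreq
  have hinc : ∀ i j m, D (i + m) - D i ≤ D (j + m) - D j + 1 := hbal.discrepancy_add_sub_le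
  have hshift : ∀ t ≤ n, D (j + t) - D j = D (i + t) - D i := by
    intro t ht
    rw [discrepancy_add_sub, discrepancy_add_sub,
      cnt_congr c fun s hs => (factor_eq_factor_iff.mp hpat s (by omega)).symm]
  have hrise : D (i + n) = D i + 1 := by
    have hceil : f * n + 1 ≤ cnt u c i n := by
      have := Nat.le_ceil (f * n)
      have : (⌈f * n⌉₊ : ℝ) + 1 ≤ cnt u c i n := by exact_mod_cast hheavy
      linarith
    linarith [discrepancy_add_sub (u := u) (c := c) (f := f) i n,
      (abs_le.mp (hbal.abs_cnt_sub_le hfreq i n)).2]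
  rcases lt_trichotomy i j with hij | hij | hij
  · exact (false_of_rise_of_shift hle hinc hij hshift hrise).elim
  · exact hij
  · refine (false_of_rise_of_shift hle hinc hij (fun t ht => (hshift t ht).symm) ?_).elim
    linarith [hshift n le_rfl]

lemma IsBalanced.false_of_ends_eq_of_ends_ne {A : Type*} [DecidableEq A] {u : ℕ → A} {c : A}
    (hbal : IsBalanced 1 u) {i j m : ℕ} (hi : u i = c) (hi' : u (i + m + 1) = c)
    (hj : u j ≠ c) (hj' : u (j + m + 1) ≠ c) (hmid : ∀ t < m, u (i + 1 + t) = u (j + 1 + t)) :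
    False := by
  have hsplit : ∀ k, cnt u c k (1 + m + 1) =
      cnt u c k 1 + cnt u c (k + 1) m + if u (k + m + 1) = c then 1 else 0 := by
    intro k
    rw [cnt_succ, cnt_add, ← add_assoc k, add_right_comm k 1 m]
  have hone : ∀ k, cnt u c k 1 = if u k = c then 1 else 0 := fun k => by
    simpa using cnt_succ u c k 0
  have := hbal i j (1 + m + 1) c
  rw [hsplit, hsplit, hone, hone, cnt_congr c hmid, if_pos hi, if_pos hi', if_neg hj,
    if_neg hj'] at this
  omega

def RightSpecial (u : ℕ → Bool) (n : ℕ) (w : Fin n → Bool) : Prop :=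
  ∀ b : Bool, ∃ i, factor u n i = w ∧ u (i + n) = b

lemma IsBalanced.rightSpecial_unique {u : ℕ → Bool} (hbal : IsBalanced 1 u) {n : ℕ}
    {w w' : Fin n → Bool} (hw : RightSpecial u n w) (hw' : RightSpecial u n w') : w = w' := by
  by_contra hne
  obtain ⟨d, hd, hlast⟩ := (Finset.univ.filter fun t => w t ≠ w' t).exists_max_image
    (fun t => (t : ℕ)) (by simpa [Finset.filter_nonempty_iff, funext_iff] using hne)
  replace hd : w d ≠ w' d := (Finset.mem_filter.mp hd).2
  obtain ⟨i, rfl, hin⟩ := hw (w d)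
  obtain ⟨j, rfl, hjn⟩ := hw' (!factor u n i d)
  refine hbal.false_of_ends_eq_of_ends_ne (i := i + d) (j := j + d) (m := n - d - 1)
    rfl ?_ hd.symm ?_ ?_
  · rw [show i + d + (n - d - 1) + 1 = i + n by omega, hin]
    rfl
  · rw [show j + d + (n - d - 1) + 1 = j + n by omega, hjn]
    simp [factor]
  · intro t ht
    by_contra hne
    have : d + 1 + t ≤ d := hlast ⟨d + 1 + t, by omega⟩
      (Finset.mem_filter.mpr ⟨Finset.mem_univ _, by simpa [factor, ← add_assoc] using hne⟩)
    omega

lemma rightSpecial_factor_of_ne {u : ℕ → Bool} {n i j : ℕ} (hij : factor u n i = factor u n j)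
    (hne : u (i + n) ≠ u (j + n)) : RightSpecial u n (factor u n i) := by
  intro b
  by_cases hb : u (i + n) = b
  · exact ⟨i, rfl, hb⟩
  · exact ⟨j, hij.symm, by cases b <;> cases h : u (i + n) <;> simp_all⟩

lemma IsBalanced.complexity_succ_le {u : ℕ → Bool} (hbal : IsBalanced 1 u) (n : ℕ) :
    complexity u (n + 1) ≤ complexity u n + 1 := by
  have hinit : Fin.init '' Set.range (factor u (n + 1)) = Set.range (factor u n) := by
    rw [← Set.range_comp]
    rfl
  rw [complexity_eq_ncard_range, complexity_eq_ncard_range, ← hinit]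
  suffices ∃ x, Set.InjOn Fin.init (Set.range (factor u (n + 1)) \ {x}) by
    obtain ⟨x, hx⟩ := this
    exact ncard_le_ncard_image_add_one (Set.toFinite _) hx
  -- `x` is the extension by `true` of the right special factor, if there is one.
  by_cases hrs : ∃ w, RightSpecial u n w
  · obtain ⟨w, hw⟩ := hrs
    refine ⟨Fin.snoc w true, ?_⟩
    rintro _ ⟨⟨i, rfl⟩, hi⟩ _ ⟨⟨j, rfl⟩, hj⟩ hij
    simp only [factor_succ, Fin.init_snoc, Set.mem_singleton_iff] at hi hj hij ⊢
    by_contra hne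
    have hlast : u (i + n) ≠ u (j + n) := fun h => hne (by rw [hij, h])
    have hwi := hbal.rightSpecial_unique (rightSpecial_factor_of_ne hij hlast) hw
    rw [← hij, hwi] at hj
    rw [hwi] at hi
    cases hi' : u (i + n) <;> cases hj' : u (j + n) <;> simp_all
  · refine ⟨default, Set.InjOn.mono Set.sdiff_subset ?_⟩
    rintro _ ⟨i, rfl⟩ _ ⟨j, rfl⟩ hij
    simp only [factor_succ, Fin.init_snoc] at hij ⊢
    by_contra hne
    exact hrs ⟨_, rightSpecial_factor_of_ne hij fun h => hne (by rw [hij, h])⟩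

lemma IsBalanced.complexity_le {u : ℕ → Bool} (hbal : IsBalanced 1 u) (n : ℕ) :
    complexity u n ≤ n + 1 := by
  induction n with
  | zero => simp
  | succ n ih => exact (hbal.complexity_succ_le n).trans (by omega)

lemma HasFreq.exists_cnt_eq {A : Type*} [DecidableEq A] {u : ℕ → A} {c : A} {f : ℝ}
    (hfreq : HasFreq u c f) (hf : 0 < f) (k : ℕ) : ∃ i, u i = c ∧ cnt u c 0 i = k := by
  have hunbounded : ∃ N, k < cnt u c 0 N := by
    have : Tendsto (fun N : ℕ => (cnt u c 0 N : ℝ)) atTop atTop := by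
      refine (hfreq.pos_mul_atTop hf tendsto_natCast_atTop_atTop).congr' ?_
      filter_upwards [eventually_gt_atTop 0] with N hN
      field_simp
    obtain ⟨N, hN⟩ := (this.eventually_gt_atTop (k : ℝ)).exists
    exact ⟨N, by exact_mod_cast hN⟩
  have hnext := Nat.find_spec hunbounded
  obtain ⟨i, hi⟩ := Nat.exists_eq_add_one_of_ne_zero (n := Nat.find hunbounded) fun h0 => by
    simp [h0] at hnext
  have hmin := Nat.find_min hunbounded (show i < Nat.find hunbounded by omega)
  rw [hi, cnt_succ, zero_add] at hnext
  split_ifs at hnext with hc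
  · exact ⟨i, hc, by omega⟩
  · omega

lemma HasFreq.false_of_true {u : ℕ → Bool} {f : ℝ} (hfreq : HasFreq u true f) :
    HasFreq u false (1 - f) := by
  refine (tendsto_const_nhds.sub hfreq).congr' ?_
  filter_upwards [eventually_gt_atTop 0] with n hn
  have h : (cnt u true 0 n : ℝ) + cnt u false 0 n = n := by
    exact_mod_cast cnt_true_add_cnt_false u 0 n
  rw [show (cnt u false 0 n : ℝ) = n - cnt u true 0 n by linarith]
  field_simp

section Colour

variable {A B : Type*} (u : ℕ → Bool) (va : ℕ → A) (vb : ℕ → B)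

lemma colour_add (i t : ℕ) : colour u va vb (i + t) =
    if u (i + t) then Sum.inl (va (cnt u true 0 i + cnt u true i t))
    else Sum.inr (vb (cnt u false 0 i + cnt u false i t)) := by
  simp only [colour, cnt_add u _ 0 i t, zero_add]

variable {u va vb}

lemma finite_range_left_of_colour (hocc : ∀ k, ∃ i, u i = true ∧ cnt u true 0 i = k)
    (h : (Set.range (colour u va vb)).Finite) : (Set.range va).Finite :=
  (h.preimage Sum.inl_injective.injOn).subset <| by
    rintro _ ⟨k, rfl⟩
    obtain ⟨i, hi, rfl⟩ := hocc k
    exact ⟨i, by simp [colour, hi]⟩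

lemma finite_range_right_of_colour (hocc : ∀ k, ∃ i, u i = false ∧ cnt u false 0 i = k)
    (h : (Set.range (colour u va vb)).Finite) : (Set.range vb).Finite :=
  (h.preimage Sum.inr_injective.injOn).subset <| by
    rintro _ ⟨k, rfl⟩
    obtain ⟨i, hi, rfl⟩ := hocc k
    exact ⟨i, by simp [colour, hi]⟩

lemma factor_colour_eq_of_le {n i j ma mb : ℕ} (hpat : factor u n i = factor u n j)
    (ha : cnt u true i n ≤ ma) (hb : cnt u false i n ≤ mb)
    (hva : factor va ma (cnt u true 0 i) = factor va ma (cnt u true 0 j))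
    (hvb : factor vb mb (cnt u false 0 i) = factor vb mb (cnt u false 0 j)) :
    factor (colour u va vb) n i = factor (colour u va vb) n j := by
  rw [factor_eq_factor_iff] at hpat ⊢
  intro t ht
  have hcnt : ∀ c, cnt u c i t = cnt u c j t :=
    fun c => cnt_congr c fun s hs => hpat s (by omega)
  rw [colour_add, colour_add, ← hpat t ht, ← hcnt, ← hcnt]
  cases hu : u (i + t)
  · exact congrArg Sum.inr (congrFun hvb ⟨_, (cnt_lt_cnt_of_lt u false ht hu).trans_le hb⟩)
  · exact congrArg Sum.inl (congrFun hva ⟨_, (cnt_lt_cnt_of_lt u true ht hu).trans_le ha⟩)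

lemma IsBalanced.factor_colour_eq (hbal : IsBalanced 1 u) {α : ℝ} (hfreq : HasFreq u true α)
    {n i j : ℕ}
    (h : (factor u n i, factor va ⌈α * n⌉₊ (cnt u true 0 i),
        factor vb ⌈(1 - α) * n⌉₊ (cnt u false 0 i)) =
      (factor u n j, factor va ⌈α * n⌉₊ (cnt u true 0 j),
        factor vb ⌈(1 - α) * n⌉₊ (cnt u false 0 j))) :
    factor (colour u va vb) n i = factor (colour u va vb) n j := by
  obtain ⟨hpat, hva, hvb⟩ := Prod.ext_iff.mp h |>.imp_right Prod.ext_iff.mp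
  by_cases hgood : cnt u true i n ≤ ⌈α * n⌉₊ ∧ cnt u false i n ≤ ⌈(1 - α) * n⌉₊
  · exact factor_colour_eq_of_le hpat hgood.1 hgood.2 hva hvb
  · rcases not_and_or.mp hgood with ha | hb
    · rw [hbal.eq_of_factor_eq_of_ceil_lt_cnt hfreq hpat (not_le.mp ha)]
    · rw [hbal.eq_of_factor_eq_of_ceil_lt_cnt hfreq.false_of_true hpat (not_le.mp hb)]

end Colour

theorem colour_complexity_bound_general {A B : Type*}
    (u : ℕ → Bool) (va : ℕ → A) (vb : ℕ → B)
    (α : ℝ) (hα : α ∈ Set.Ioo (0 : ℝ) 1)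
    (hbal : IsBalanced 1 u) (hfreq : HasFreq u true α) (n : ℕ) :
    complexity (colour u va vb) n ≤
      (n + 1) * complexity va ⌈α * n⌉₊ * complexity vb ⌈(1 - α) * n⌉₊ := by
  rcases Nat.eq_zero_or_pos n with rfl | hn
  · simp
  rcases (Set.range (factor (colour u va vb) n)).infinite_or_finite with hinf | hfin
  · rw [complexity_eq_ncard_range, hinf.ncard]
    exact Nat.zero_le _
  have hv := finite_range_of_finite_range_factor hn hfin
  have hA := finite_range_left_of_colour (hfreq.exists_cnt_eq hα.1) hv
  have hB := finite_range_right_of_colour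
    (hfreq.false_of_true.exists_cnt_eq (by linarith [hα.2])) hv
  set ma := ⌈α * n⌉₊
  set mb := ⌈(1 - α) * n⌉₊
  have hsub : Set.range (fun i => (factor u n i, factor va ma (cnt u true 0 i),
      factor vb mb (cnt u false 0 i))) ⊆
      Set.range (factor u n) ×ˢ Set.range (factor va ma) ×ˢ Set.range (factor vb mb) := by
    rintro _ ⟨i, rfl⟩
    exact ⟨⟨i, rfl⟩, ⟨_, rfl⟩, ⟨_, rfl⟩⟩
  have hprod := (Set.range (factor u n)).toFinite.prod
    ((finite_range_factor hA ma).prod (finite_range_factor hB mb))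
  simp only [complexity_eq_ncard_range]
  calc (Set.range (factor (colour u va vb) n)).ncard
      ≤ _ := ncard_range_le_of_factorsThrough (fun i j h => hbal.factor_colour_eq hfreq h)
        (hprod.subset hsub)
    _ ≤ _ := Set.ncard_le_ncard hsub hprod
    _ = (Set.range (factor u n)).ncard * (Set.range (factor va ma)).ncard *
        (Set.range (factor vb mb)).ncard := by rw [Set.ncard_prod, Set.ncard_prod, mul_assoc]
    _ ≤ _ := by
      gcongr
      rw [← complexity_eq_ncard_range]
      exact hbal.complexity_le n

/-- If `u` is a `1`-balanced binary sequence in which the letter `a` (`true`) has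
frequency `α ∈ (0,1)`, then the factor complexity of `v = colour(u, va, vb)`
satisfies `𝒞_v(n) ≤ (n+1)·𝒞_va(⌈αn⌉)·𝒞_vb(⌈(1-α)n⌉)`. -/
theorem colour_complexity_bound {A B : Type*} [DecidableEq A] [DecidableEq B]
    (u : ℕ → Bool) (va : ℕ → A) (vb : ℕ → B)
    (α : ℝ) (hα : α ∈ Set.Ioo (0 : ℝ) 1)
    (hbal : IsBalanced 1 u) (hfreq : HasFreq u true α) (n : ℕ) :
    complexity (colour u va vb) n ≤
      (n + 1) * complexity va ⌈α * n⌉₊ * complexity vb ⌈(1 - α) * n⌉₊ :=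
  colour_complexity_bound_general u va vb α hα hbal hfreq n
end

section
/- Let u be a sequence over {a, b} in which the letter a has frequency α ∈ (0, 1), let 𝐚 = (12)^ω be the periodic sequence 1, 2, 1, 2, … and 𝐛 = (3)^ω the constant sequence 3, 3, 3, …, and let v = colour(u, 𝐚, 𝐛). Then the frequency vector of v is (α/2, α/2, 1−α), i.e., letter 1 has frequency α/2, letter 2 has frequency α/2, and letter 3 has frequency 1−α in v. -/
open Finset Filter Topology

lemma cnt_succ_s9 {A : Type*} [DecidableEq A] (w : ℕ → A) (c : A) (n : ℕ) :
    cnt w c 0 (n + 1) = cnt w c 0 n + (if w n = c then 1 else 0) := by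
  unfold cnt
  simp only [zero_add, Nat.Ico_zero_eq_range, Finset.range_add_one, Finset.filter_insert]
  split
  · rw [Finset.card_insert_of_notMem (by simp)]
  · simp

/-- Colouring a binary sequence with `a`-frequency `α ∈ (0,1)` by the constant gap
sequences `(12)^ω` (letters `1,2` encoded as `0,1 : Fin 2`) and `(3)^ω`
(letter `3` encoded as `0 : Fin 1`) yields the frequency vector
`(α/2, α/2, 1-α)`. -/
theorem colour_freq_vector_ternary (u : ℕ → Bool) (α : ℝ)
    (hα : α ∈ Set.Ioo (0 : ℝ) 1) (hu : HasFreq u true α)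
    (va : ℕ → Fin 2) (hva : ∀ n, va n = if n % 2 = 0 then 0 else 1)
    (vb : ℕ → Fin 1) (hvb : ∀ n, vb n = 0) :
    HasFreq (colour u va vb) (Sum.inl 0) (α / 2) ∧
    HasFreq (colour u va vb) (Sum.inl 1) (α / 2) ∧
    HasFreq (colour u va vb) (Sum.inr 0) (1 - α) := by
  set v := colour u va vb with hv
  have key : ∀ n, cnt u true 0 n ≤ n ∧
      cnt v (Sum.inl 0) 0 n = (cnt u true 0 n + 1) / 2 ∧
      cnt v (Sum.inl 1) 0 n = cnt u true 0 n / 2 ∧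
      cnt v (Sum.inr 0) 0 n = n - cnt u true 0 n := by
    intro n
    induction n with
    | zero => simp [cnt]
    | succ n ih =>
      obtain ⟨h1, h2, h3, h4⟩ := ih
      simp only [cnt_succ_s9]
      cases hun : u n with
      | false =>
        have hvn : v n = Sum.inr 0 := by simp [hv, colour, hun, hvb]
        simp [hvn, hun]
        omega
      | true =>
        rcases Nat.mod_two_eq_zero_or_one (cnt u true 0 n) with hp | hp
        · have hvn : v n = Sum.inl 0 := by simp [hv, colour, hun, hva, hp]
          simp [hvn, hun]
          omega
        · have hvn : v n = Sum.inl 1 := by simp [hv, colour, hun, hva, hp]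
          simp [hvn, hun]
          omega
  have hdiv : ∀ (a b : ℝ) (n : ℕ), a ≤ b → a / (n : ℝ) ≤ b / (n : ℝ) := by
    intro a b n h
    rcases Nat.eq_zero_or_pos n with h0 | h0
    · simp [h0]
    · exact (div_le_div_iff_of_pos_right (by exact_mod_cast h0)).mpr h
  have honen : Tendsto (fun n : ℕ => 1 / (n : ℝ)) atTop (𝓝 0) :=
    tendsto_one_div_atTop_nhds_zero_nat
  refine ⟨?_, ?_, ?_⟩
  · -- letter 1
    unfold HasFreq
    refine tendsto_of_tendsto_of_tendsto_of_le_of_le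
      (g := fun n : ℕ => ((cnt u true 0 n : ℝ) / n) / 2)
      (h := fun n : ℕ => ((cnt u true 0 n : ℝ) / n + 1 / n) / 2)
      (hu.div_const 2) (by simpa using (hu.add honen).div_const 2) ?_ ?_
    · intro n
      dsimp only
      rw [(key n).2.1]
      have h2 : cnt u true 0 n ≤ 2 * ((cnt u true 0 n + 1) / 2) := by omega
      have hr : (cnt u true 0 n : ℝ) / 2 ≤ (((cnt u true 0 n + 1) / 2 : ℕ) : ℝ) := by
        have := (Nat.cast_le (α := ℝ)).mpr h2; push_cast at this; linarith
      calc ((cnt u true 0 n : ℝ) / n) / 2 = ((cnt u true 0 n : ℝ) / 2) / n := by ring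
        _ ≤ _ := hdiv _ _ _ hr
    · intro n
      dsimp only
      rw [(key n).2.1]
      have h2 : 2 * ((cnt u true 0 n + 1) / 2) ≤ cnt u true 0 n + 1 := by omega
      have hr : (((cnt u true 0 n + 1) / 2 : ℕ) : ℝ) ≤ ((cnt u true 0 n : ℝ) + 1) / 2 := by
        have := (Nat.cast_le (α := ℝ)).mpr h2; push_cast at this; linarith
      calc (((cnt u true 0 n + 1) / 2 : ℕ) : ℝ) / n
          ≤ (((cnt u true 0 n : ℝ) + 1) / 2) / n := hdiv _ _ _ hr
        _ = ((cnt u true 0 n : ℝ) / n + 1 / n) / 2 := by ring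
  · -- letter 2
    unfold HasFreq
    refine tendsto_of_tendsto_of_tendsto_of_le_of_le
      (g := fun n : ℕ => ((cnt u true 0 n : ℝ) / n - 1 / n) / 2)
      (h := fun n : ℕ => ((cnt u true 0 n : ℝ) / n) / 2)
      (by simpa using (hu.sub honen).div_const 2) (hu.div_const 2) ?_ ?_
    · intro n
      dsimp only
      rw [(key n).2.2.1]
      have h2 : cnt u true 0 n ≤ 2 * (cnt u true 0 n / 2) + 1 := by omega
      have hr : ((cnt u true 0 n : ℝ) - 1) / 2 ≤ ((cnt u true 0 n / 2 : ℕ) : ℝ) := by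
        have := (Nat.cast_le (α := ℝ)).mpr h2; push_cast at this; linarith
      calc ((cnt u true 0 n : ℝ) / n - 1 / n) / 2
          = (((cnt u true 0 n : ℝ) - 1) / 2) / n := by ring
        _ ≤ _ := hdiv _ _ _ hr
    · intro n
      dsimp only
      rw [(key n).2.2.1]
      have h2 : 2 * (cnt u true 0 n / 2) ≤ cnt u true 0 n := by omega
      have hr : ((cnt u true 0 n / 2 : ℕ) : ℝ) ≤ (cnt u true 0 n : ℝ) / 2 := by
        have := (Nat.cast_le (α := ℝ)).mpr h2; push_cast at this; linarith
      calc ((cnt u true 0 n / 2 : ℕ) : ℝ) / n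
          ≤ ((cnt u true 0 n : ℝ) / 2) / n := hdiv _ _ _ hr
        _ = ((cnt u true 0 n : ℝ) / n) / 2 := by ring
  · -- letter 3
    have heq : (fun n : ℕ => 1 - (cnt u true 0 n : ℝ) / n) =ᶠ[atTop]
        (fun n : ℕ => (cnt v (Sum.inr 0) 0 n : ℝ) / n) := by
      filter_upwards [eventually_gt_atTop 0] with n hn
      have hne : (n : ℝ) ≠ 0 := Nat.cast_ne_zero.mpr hn.ne'
      rw [(key n).2.2.2, Nat.cast_sub (key n).1, sub_div, div_self hne]
    exact Tendsto.congr' heq (tendsto_const_nhds.sub hu)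
end
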